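/- Let L ⊆ Ω(d) be a finite set with |x^*y| < 1 for all distinct x,y ∈ L, let ω ∈ ℂ be a primitive n-th root of unity (n ≥ 2), and let X = ⋃_{i=0}^{n−1} ω^i L (the sets ω^i L are then pairwise disjoint). Suppose X is a complex spherical 𝒯-design for a lower set 𝒯, and let t = max{k : (k,k) ∈ 𝒯}. Then Σ_{x,y∈L} |x^*y|^{2t} = |L|²/C(d+t−1,t); that is, the projective points spanned by L form a complex projective t-design. -/

import Mathlib

open Finset

/-- The Hermitian inner product `x^* y = ∑ i, conj (x i) * y i` on `ℂ^d`. -/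
noncomputable def cInner {d : ℕ} (x y : Fin d → ℂ) : ℂ :=
  ∑ i, (starRingEnd ℂ) (x i) * y i

/-- A lower set in `ℕ × ℕ` with respect to the product order. -/
def IsLowerSet' (T : Finset (ℕ × ℕ)) : Prop :=
  ∀ kl ∈ T, ∀ mn : ℕ × ℕ, mn.1 ≤ kl.1 → mn.2 ≤ kl.2 → mn ∈ T

/-- The average over the unit sphere `Ω(d)` of the monomial
`z ↦ ∏ i, z i ^ a i * conj (z i) ^ b i`. -/
noncomputable def monomialAvg (d : ℕ) (a b : Fin d → ℕ) : ℂ :=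
  if a = b then
    ((Nat.factorial (d - 1) : ℂ) * ∏ i, (Nat.factorial (a i) : ℂ)) /
      (Nat.factorial (d + (∑ i, a i) - 1) : ℂ)
  else 0

/-- `X` is a complex spherical `T`-design: every monomial of bidegree `(k,l) ∈ T`
has the same average over `X` as over the sphere `Ω(d)`. -/
def IsDesign (d : ℕ) (X : Finset (Fin d → ℂ)) (T : Finset (ℕ × ℕ)) : Prop :=
  ∀ kl ∈ T, ∀ a b : Fin d → ℕ, (∑ i, a i) = kl.1 → (∑ i, b i) = kl.2 →
    (∑ z ∈ X, (∏ i, (z i) ^ (a i)) * ∏ i, ((starRingEnd ℂ) (z i)) ^ (b i))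
      = (X.card : ℂ) * monomialAvg d a b

/-- The Jacobi polynomial `g_{k,l}` for the complex sphere in dimension `d`. -/
noncomputable def jacobi (d k l : ℕ) (x : ℂ) : ℂ :=
  (((d + k + l - 1 : ℕ) : ℂ) / (Nat.factorial (d - 1) : ℂ)) *
    ∑ r ∈ Finset.range (min k l + 1),
      (((-1 : ℂ) ^ r * (Nat.factorial (d + k + l - r - 2) : ℂ)) /
          ((Nat.factorial r : ℂ) * (Nat.factorial (k - r) : ℂ) *
            (Nat.factorial (l - r) : ℂ))) *
        x ^ (k - r) * ((starRingEnd ℂ) x) ^ (l - r)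

open scoped Classical in
/-- The inner product set `A(X) = {x^* y : x, y ∈ X, x ≠ y}`. -/
noncomputable def innerSet {d : ℕ} (X : Finset (Fin d → ℂ)) : Finset ℂ :=
  ((X ×ˢ X).filter fun p => p.1 ≠ p.2).image fun p => cInner p.1 p.2

/-- `m_{k,l}`, the dimension of the harmonic space `Harm(k,l)` in dimension `d`. -/
def mdim (d k l : ℕ) : ℕ :=
  (d + k - 1).choose (d - 1) * (d + l - 1).choose (d - 1) -
    (d + k - 2).choose (d - 1) * (d + l - 2).choose (d - 1)

/-- The convolution `U * V = {(k + l', k' + l) : (k,l) ∈ U, (k',l') ∈ V}`. -/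
def convSet (U V : Finset (ℕ × ℕ)) : Finset (ℕ × ℕ) :=
  (U ×ˢ V).image fun p => (p.1.1 + p.2.2, p.2.1 + p.1.2)

/-- `X` is an `S`-code: it has an annihilator polynomial supported on monomials
`x^k * conj x^l` with `(k,l) ∈ S`. -/
def IsCode (d : ℕ) (X : Finset (Fin d → ℂ)) (S : Finset (ℕ × ℕ)) : Prop :=
  ∃ c : ℕ × ℕ → ℝ,
    (∀ α ∈ innerSet X, ∑ kl ∈ S, (c kl : ℂ) * α ^ kl.1 * ((starRingEnd ℂ) α) ^ kl.2 = 0) ∧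
    0 < ∑ kl ∈ S, c kl

open scoped Classical

/-!
Expanding `(z^* w)^t` by the multinomial theorem writes the frame potential
`∑_{z,w ∈ X} |z^* w|^{2t}` as `∑_{a,b} m_a m_b M_{ab} M_{ba}`, where `m_a` is the multinomial
coefficient and `M_{ab} = ∑_{z ∈ X} z^a conj(z)^b` are the moments of bidegree `(t,t)`. For a
design containing `(t,t)` these moments are those of the sphere, so `m_a M_{ab}` vanishes off the
diagonal and equals `|X| / C(d+t-1,t)` on it; as there are `C(d+t-1,t)` multi-indices of weight
`t`, the frame potential of `X` is `|X|² / C(d+t-1,t)`. Since `|ω| = 1`, the phases drop out of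
`|(ω^i x)^* (ω^j y)|`, and the hypothesis `|x^* y| < 1` makes the union `⋃ ω^i L` disjoint, so
`|X| = n |L|` and the frame potential of `X` is `n²` times that of `L`.
-/

open ComplexConjugate

section Inner

variable {d : ℕ}

lemma cInner_smul_left (c : ℂ) (x y : Fin d → ℂ) : cInner (c • x) y = conj c * cInner x y := by
  simp only [cInner, Pi.smul_apply, smul_eq_mul, map_mul, mul_sum, mul_assoc]

lemma cInner_smul_right (c : ℂ) (x y : Fin d → ℂ) : cInner x (c • y) = c * cInner x y := by
  simp only [cInner, Pi.smul_apply, smul_eq_mul, mul_sum, mul_left_comm]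

lemma conj_cInner (x y : Fin d → ℂ) : conj (cInner x y) = cInner y x := by
  simp only [cInner, map_sum, map_mul, Complex.conj_conj]
  exact sum_congr rfl fun i _ => mul_comm _ _

lemma norm_cInner_smul_smul {c c' : ℂ} (hc : ‖c‖ = 1) (hc' : ‖c'‖ = 1) (x y : Fin d → ℂ) :
    ‖cInner (c • x) (c' • y)‖ = ‖cInner x y‖ := by
  simp [cInner_smul_left, cInner_smul_right, hc, hc']

lemma cInner_pow_mul_cInner_pow (x y : Fin d → ℂ) (t : ℕ) :
    cInner x y ^ t * cInner y x ^ t = ((‖cInner x y‖ ^ (2 * t) : ℝ) : ℂ) := by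
  rw [← conj_cInner x y, ← mul_pow, Complex.mul_conj, Complex.normSq_eq_norm_sq, pow_mul]
  norm_cast

lemma cInner_pow_eq_sum (x y : Fin d → ℂ) (t : ℕ) :
    cInner x y ^ t = ∑ a ∈ piAntidiag univ t,
      (Nat.multinomial univ a : ℂ) * ((∏ i, conj (x i) ^ a i) * ∏ i, y i ^ a i) := by
  rw [cInner, sum_pow_eq_sum_piAntidiag]
  simp only [mul_pow, prod_mul_distrib]

end Inner

lemma card_piAntidiag_univ_fin (d t : ℕ) :
    #(piAntidiag (univ : Finset (Fin d)) t) = (d + t - 1).choose t := by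
  rw [← map_sym_eq_piAntidiag, card_map, sym_univ, card_univ, Sym.card_sym_eq_choose,
    Fintype.card_fin]

section Design

variable {d : ℕ}

noncomputable def momentSum (X : Finset (Fin d → ℂ)) (a b : Fin d → ℕ) : ℂ :=
  ∑ z ∈ X, (∏ i, z i ^ a i) * ∏ i, conj (z i) ^ b i

lemma sum_sum_cInner_pow_mul_cInner_pow (X : Finset (Fin d → ℂ)) (t : ℕ) :
    ∑ z ∈ X, ∑ w ∈ X, cInner z w ^ t * cInner w z ^ t =
      ∑ a ∈ piAntidiag univ t, ∑ b ∈ piAntidiag univ t,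
        (Nat.multinomial univ a * momentSum X a b) *
          (Nat.multinomial univ b * momentSum X b a) := by
  simp only [cInner_pow_eq_sum, momentSum, mul_sum, sum_mul]
  simp_rw [sum_comm (s := X) (t := piAntidiag univ t)]
  refine sum_congr rfl fun a _ => sum_congr rfl fun b _ => ?_
  rw [sum_comm]
  exact sum_congr rfl fun w _ => sum_congr rfl fun z _ => by ring

lemma multinomial_mul_monomialAvg_self {a : Fin d → ℕ} {t : ℕ} (ha : ∑ i, a i = t) :
    (Nat.multinomial univ a : ℂ) * monomialAvg d a a = 1 / (d + t - 1).choose t := by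
  -- `t ≤ d + t - 1` fails in truncated subtraction only for `d = 0 < t`, excluded by `ha`.
  have hle : t ≤ d + t - 1 := by
    rcases d with _ | d
    · simp only [univ_eq_empty, sum_empty] at ha
      omega
    · omega
  have hchoose := Nat.choose_mul_factorial_mul_factorial hle
  rw [show d + t - 1 - t = d - 1 by omega] at hchoose
  have hmult := Nat.multinomial_spec univ a
  rw [ha] at hmult
  rw [monomialAvg, if_pos rfl, ha, ← hchoose, ← hmult]
  have hm : (Nat.multinomial univ a : ℂ) ≠ 0 := by exact_mod_cast (Nat.multinomial_pos univ a).ne'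
  have hp : ∏ i, ((a i).factorial : ℂ) ≠ 0 :=
    prod_ne_zero_iff.2 fun i _ => Nat.cast_ne_zero.2 (Nat.factorial_ne_zero _)
  have hf : ((d - 1).factorial : ℂ) ≠ 0 := Nat.cast_ne_zero.2 (Nat.factorial_ne_zero _)
  push_cast
  field_simp

variable {X : Finset (Fin d → ℂ)} {T : Finset (ℕ × ℕ)} {t : ℕ}

lemma IsDesign.multinomial_mul_momentSum (hX : IsDesign d X T) (ht : (t, t) ∈ T)
    {a b : Fin d → ℕ} (ha : a ∈ piAntidiag univ t) (hb : b ∈ piAntidiag univ t) :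
    (Nat.multinomial univ a : ℂ) * momentSum X a b =
      if a = b then (#X : ℂ) / (d + t - 1).choose t else 0 := by
  rw [mem_piAntidiag] at ha hb
  rw [momentSum, hX (t, t) ht a b ha.1 hb.1]
  split_ifs with hab
  · subst hab
    rw [mul_left_comm, multinomial_mul_monomialAvg_self ha.1, mul_one_div]
  · simp [monomialAvg, hab]

theorem IsDesign.sum_sum_norm_cInner_pow (hX : IsDesign d X T) (ht : (t, t) ∈ T) :
    ∑ z ∈ X, ∑ w ∈ X, ‖cInner z w‖ ^ (2 * t) = (#X : ℝ) ^ 2 / (d + t - 1).choose t := by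
  apply Complex.ofReal_injective
  simp only [Complex.ofReal_sum, ← cInner_pow_mul_cInner_pow, sum_sum_cInner_pow_mul_cInner_pow]
  rw [sum_congr rfl fun a ha => sum_eq_single_of_mem a ha fun b hb hba => by
    rw [hX.multinomial_mul_momentSum ht ha hb, if_neg fun h => hba h.symm, zero_mul]]
  rw [sum_congr rfl fun a ha => by rw [hX.multinomial_mul_momentSum ht ha ha, if_pos rfl]]
  rw [sum_const, card_piAntidiag_univ_fin, nsmul_eq_mul]
  push_cast
  rcases eq_or_ne ((d + t - 1).choose t : ℂ) 0 with hC | hC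
  · simp [hC]
  · field_simp

end Design

section Cover

variable {d n : ℕ} {ω : ℂ} {L : Finset (Fin d → ℂ)}

lemma eq_of_pow_smul_eq_pow_smul (hω : IsPrimitiveRoot ω n) (hL1 : ∀ x ∈ L, cInner x x = 1)
    (hL : ∀ x ∈ L, ∀ y ∈ L, x ≠ y → ‖cInner x y‖ < 1) {i j : ℕ} (hi : i < n) (hj : j < n)
    {x y : Fin d → ℂ} (hx : x ∈ L) (hy : y ∈ L) (h : ω ^ i • x = ω ^ j • y) : i = j ∧ x = y := by
  have hinner : ω ^ i = ω ^ j * cInner x y := by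
    simpa [cInner_smul_right, hL1 x hx] using congrArg (cInner x) h
  obtain rfl : x = y := by
    by_contra hne
    have hnorm := congrArg norm hinner
    simp only [norm_mul, norm_pow, hω.norm'_eq_one (by omega : n ≠ 0), one_pow, one_mul] at hnorm
    exact (hL x hx y hy hne).ne hnorm.symm
  rw [hL1 x hx, mul_one] at hinner
  exact ⟨hω.pow_inj hi hj hinner, rfl⟩

lemma sum_biUnion_pow_smul {β : Type*} [AddCommMonoid β] (hω : IsPrimitiveRoot ω n)
    (hL1 : ∀ x ∈ L, cInner x x = 1) (hL : ∀ x ∈ L, ∀ y ∈ L, x ≠ y → ‖cInner x y‖ < 1)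
    (g : (Fin d → ℂ) → β) :
    ∑ z ∈ (range n).biUnion (fun i => L.image fun x => ω ^ i • x), g z =
      ∑ i ∈ range n, ∑ x ∈ L, g (ω ^ i • x) := by
  rw [sum_biUnion]
  · refine sum_congr rfl fun i hi => sum_image fun x hx y hy hxy => ?_
    exact (eq_of_pow_smul_eq_pow_smul hω hL1 hL (mem_range.1 hi) (mem_range.1 hi) hx hy hxy).2
  · intro i hi j hj hij
    simp only [coe_range, Set.mem_Iio] at hi hj
    simp only [Function.onFun, disjoint_left, mem_image]
    rintro _ ⟨x, hx, rfl⟩ ⟨y, hy, hyx⟩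
    exact hij (eq_of_pow_smul_eq_pow_smul hω hL1 hL hj hi hy hx hyx).1.symm

end Cover

theorem stmt_3_general {d n : ℕ} (hn : 2 ≤ n) (ω : ℂ) (hω : IsPrimitiveRoot ω n)
    (L : Finset (Fin d → ℂ)) (hLsphere : ∀ x ∈ L, cInner x x = 1)
    (hLa : ∀ x ∈ L, ∀ y ∈ L, x ≠ y → ‖cInner x y‖ < 1)
    (T : Finset (ℕ × ℕ))
    (hdesign : IsDesign d ((Finset.range n).biUnion fun i => L.image fun x => ω ^ i • x) T)
    (t : ℕ) (htT : (t, t) ∈ T) :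
    ∑ x ∈ L, ∑ y ∈ L, ‖cInner x y‖ ^ (2 * t) =
      (L.card : ℝ) ^ 2 / ((d + t - 1).choose t) := by
  have hsum := sum_biUnion_pow_smul (β := ℝ) hω hLsphere hLa
  set X := (range n).biUnion fun i => L.image fun x => ω ^ i • x
  have hω1 : ∀ i : ℕ, ‖ω ^ i‖ = 1 := fun i => by
    rw [norm_pow, hω.norm'_eq_one (by omega), one_pow]
  have hcard : (#X : ℝ) = n * #L := by simpa using hsum fun _ => 1
  have hpot : ∑ z ∈ X, ∑ w ∈ X, ‖cInner z w‖ ^ (2 * t) =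
      n ^ 2 * ∑ x ∈ L, ∑ y ∈ L, ‖cInner x y‖ ^ (2 * t) := by
    simp only [hsum, norm_cInner_smul_smul (hω1 _) (hω1 _), sum_const, card_range, nsmul_eq_mul,
      ← mul_sum]
    ring
  have key := hdesign.sum_sum_norm_cInner_pow htT
  rw [hpot, hcard] at key
  have hn2 : (n : ℝ) ^ 2 ≠ 0 := pow_ne_zero 2 (Nat.cast_ne_zero.2 (by omega))
  apply mul_left_cancel₀ hn2
  rw [key]
  ring

/-- if the `n`-antipodal cover `X = ⋃_{i<n} ω^i L` is a `T`-design
and `t = max{k : (k,k) ∈ T}`, then the lines spanned by `L` form a complex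
projective `t`-design. -/
theorem stmt_3 {d n : ℕ} (hn : 2 ≤ n) (ω : ℂ) (hω : IsPrimitiveRoot ω n)
    (L : Finset (Fin d → ℂ)) (hLsphere : ∀ x ∈ L, cInner x x = 1)
    (hLa : ∀ x ∈ L, ∀ y ∈ L, x ≠ y → ‖cInner x y‖ < 1)
    (T : Finset (ℕ × ℕ)) (hT : IsLowerSet' T)
    (hdesign : IsDesign d ((Finset.range n).biUnion fun i => L.image fun x => ω ^ i • x) T)
    (t : ℕ) (htT : (t, t) ∈ T) (htmax : ∀ k : ℕ, (k, k) ∈ T → k ≤ t) :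
    ∑ x ∈ L, ∑ y ∈ L, ‖cInner x y‖ ^ (2 * t) =
      (L.card : ℝ) ^ 2 / ((d + t - 1).choose t) :=
  stmt_3_general hn ω hω L hLsphere hLa T hdesign t htT
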